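/- arXiv:2103.14773 — 12 statements merged into one kernel-verified Lean document; each statement's English description precedes it below -/
import Mathlib

section
/- Let n be a positive integer such that p = 4n−1 is prime, and let k, m be integers with 0 ≤ k ≤ n. If m·p − k < k² − k ≤ (m+1)·p − n − 1, then r_p(k²) + r_p((2n−k)²) = 2k² − k + n − 2mp. -/
/-- Lemma 3(i): for `p = 4n-1` prime and `0 ≤ k ≤ n`,
if `mp - k < k² - k ≤ (m+1)p - n - 1` then
`r_p(k²) + r_p((2n-k)²) = 2k² - k + n - 2mp`. -/
theorem stmt_2 (n : ℤ) (hn : 0 < n) (p : ℤ) (hp : p = 4 * n - 1) (hpp : Prime p)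
    (k m : ℤ) (hk0 : 0 ≤ k) (hk1 : k ≤ n)
    (h1 : m * p - k < k ^ 2 - k) (h2 : k ^ 2 - k ≤ (m + 1) * p - n - 1) :
    k ^ 2 % p + (2 * n - k) ^ 2 % p = 2 * k ^ 2 - k + n - 2 * m * p := by
  have hpos : 0 < p := by omega
  have hq : (m + 1) * p = m * p + p := by ring
  have e1 : k ^ 2 % p = k ^ 2 - m * p := by
    have h : k ^ 2 % p = (k ^ 2 - m * p) % p := by
      conv_lhs => rw [show k ^ 2 = (k ^ 2 - m * p) + m * p by ring]
      rw [Int.add_mul_emod_self_right]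
    rw [h, Int.emod_eq_of_lt (by omega) (by omega)]
  have e2 : (2 * n - k) ^ 2 % p = k ^ 2 + n - k - m * p := by
    have h : (2 * n - k) ^ 2 % p = (k ^ 2 + n - k - m * p) % p := by
      conv_lhs => rw [show (2 * n - k) ^ 2 =
        (k ^ 2 + n - k - m * p) + (n - k + m) * p by rw [hp]; ring]
      rw [Int.add_mul_emod_self_right]
    rw [h, Int.emod_eq_of_lt (by omega) (by omega)]
  rw [e1, e2]; ring
end

section
/- Let n be a positive integer such that p = 4n−1 is prime, and let k, m be integers with 0 ≤ k ≤ n. If (m+1)·p − n − 1 < k² − k < (m+1)·p − k, then r_p(k²) + r_p((2n−k)²) = 2k² − k + n − (2m+1)p. -/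
/-- Lemma 3(ii): for `p = 4n-1` prime and `0 ≤ k ≤ n`,
if `(m+1)p - n - 1 < k² - k < (m+1)p - k` then
`r_p(k²) + r_p((2n-k)²) = 2k² - k + n - (2m+1)p`. -/
theorem stmt_3 (n : ℤ) (hn : 0 < n) (p : ℤ) (hp : p = 4 * n - 1) (hpp : Prime p)
    (k m : ℤ) (hk0 : 0 ≤ k) (hk1 : k ≤ n)
    (h1 : (m + 1) * p - n - 1 < k ^ 2 - k) (h2 : k ^ 2 - k < (m + 1) * p - k) :
    k ^ 2 % p + (2 * n - k) ^ 2 % p = 2 * k ^ 2 - k + n - (2 * m + 1) * p := by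
  have hp0 : 0 < p := by omega
  have e1 : k ^ 2 % p = k ^ 2 - m * p := by
    conv_lhs => rw [show k ^ 2 = (k ^ 2 - m * p) + p * m by ring, Int.add_mul_emod_self_left]
    apply Int.emod_eq_of_lt
    · nlinarith
    · nlinarith
  have e2 : (2 * n - k) ^ 2 % p = k ^ 2 - k + n - (m + 1) * p := by
    conv_lhs => rw [show (2 * n - k) ^ 2 = (k ^ 2 - k + n - (m + 1) * p) + p * (n - k + m + 1) by
      rw [hp]; ring, Int.add_mul_emod_self_left]
    apply Int.emod_eq_of_lt
    · nlinarith
    · nlinarith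
  rw [e1, e2]; ring
end

section
/- Let n be a positive integer such that p = 4n−1 is prime, let k be an integer with 0 ≤ k ≤ n, and let m ≥ 0 be an integer. If √(mp) < k ≤ 1/2 + (1/2)·√(1 + 4[(m+1)p − n − 1]), then r_p(k²) + r_p((2n−k)²) = 2k² − k + n − 2mp. -/
/-- Corollary 4(i): for `p = 4n-1` prime, `0 ≤ k ≤ n`, `m ≥ 0`,
if `√(mp) < k ≤ 1/2 + (1/2)√(1 + 4[(m+1)p - n - 1])` then
`r_p(k²) + r_p((2n-k)²) = 2k² - k + n - 2mp`. -/
theorem stmt_4 (n : ℤ) (hn : 0 < n) (p : ℤ) (hp : p = 4 * n - 1) (hpp : Prime p)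
    (k m : ℤ) (hk0 : 0 ≤ k) (hk1 : k ≤ n) (hm : 0 ≤ m)
    (h1 : Real.sqrt ((m : ℝ) * (p : ℝ)) < (k : ℝ))
    (h2 : (k : ℝ) ≤ 1 / 2 + Real.sqrt (1 + 4 * (((m + 1) * p - n - 1 : ℤ) : ℝ)) / 2) :
    k ^ 2 % p + (2 * n - k) ^ 2 % p = 2 * k ^ 2 - k + n - 2 * m * p := by
  have hp0 : 0 < p := by omega
  have hk_pos : 0 < k := by
    by_contra h
    push_neg at h
    have hk' : (k : ℝ) ≤ 0 := by exact_mod_cast h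
    nlinarith [Real.sqrt_nonneg ((m : ℝ) * (p : ℝ)), h1]
  have hkR : (0 : ℝ) < (k : ℝ) := by exact_mod_cast hk_pos
  have h1' : m * p < k ^ 2 := by
    have := (Real.sqrt_lt' hkR).mp h1
    have : ((m * p : ℤ) : ℝ) < ((k ^ 2 : ℤ) : ℝ) := by push_cast; nlinarith [this]
    exact_mod_cast this
  have h2' : k ^ 2 - k + n + 1 ≤ (m + 1) * p := by
    have h2k : (0 : ℝ) ≤ 2 * (k : ℝ) - 1 := by
      have : (1 : ℝ) ≤ (k : ℝ) := by exact_mod_cast hk_pos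
      linarith
    have hle : 2 * (k : ℝ) - 1 ≤ Real.sqrt (1 + 4 * (((m + 1) * p - n - 1 : ℤ) : ℝ)) := by
      linarith
    have hxnn : (0 : ℝ) ≤ 1 + 4 * (((m + 1) * p - n - 1 : ℤ) : ℝ) := by
      have : (1 : ℤ) ≤ (m + 1) * p - n - 1 := by nlinarith
      have : (1 : ℝ) ≤ (((m + 1) * p - n - 1 : ℤ) : ℝ) := by exact_mod_cast this
      linarith
    have hsq := (Real.le_sqrt h2k hxnn).mp hle
    push_cast at hsq
    have hZ : ((k ^ 2 - k + n + 1 : ℤ) : ℝ) ≤ (((m + 1) * p : ℤ) : ℝ) := by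
      push_cast
      nlinarith [hsq]
    exact_mod_cast hZ
  have e1 : k ^ 2 % p = k ^ 2 - m * p := by
    have h0 : 0 ≤ k ^ 2 - m * p := by linarith
    have hlt : k ^ 2 - m * p < p := by nlinarith
    have hrw : k ^ 2 % p = (k ^ 2 - m * p + p * m) % p := by ring_nf
    rw [hrw, Int.add_mul_emod_self_left, Int.emod_eq_of_lt h0 hlt]
  have e2 : (k ^ 2 - k + n) % p = k ^ 2 - k + n - m * p := by
    have h0 : 0 ≤ k ^ 2 - k + n - m * p := by linarith
    have hlt : k ^ 2 - k + n - m * p < p := by linarith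
    have hrw : (k ^ 2 - k + n) % p = (k ^ 2 - k + n - m * p + p * m) % p := by ring_nf
    rw [hrw, Int.add_mul_emod_self_left, Int.emod_eq_of_lt h0 hlt]
  have hsq2 : (2 * n - k) ^ 2 = (k ^ 2 - k + n) + p * (n - k) := by rw [hp]; ring
  rw [hsq2, Int.add_mul_emod_self_left, e1, e2]
  ring
end

section
/- Let n be a positive integer such that p = 4n−1 is prime, let k be an integer with 0 ≤ k ≤ n, and let m ≥ 0 be an integer. If 1/2 + (1/2)·√(1 + 4[(m+1)p − n − 1]) < k < √((m+1)p), then r_p(k²) + r_p((2n−k)²) = 2k² − k + n − (2m+1)p. -/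
/-- Corollary 4(ii): for `p = 4n-1` prime, `0 ≤ k ≤ n`, `m ≥ 0`,
if `1/2 + (1/2)√(1 + 4[(m+1)p - n - 1]) < k < √((m+1)p)` then
`r_p(k²) + r_p((2n-k)²) = 2k² - k + n - (2m+1)p`. -/
theorem stmt_5 (n : ℤ) (hn : 0 < n) (p : ℤ) (hp : p = 4 * n - 1) (hpp : Prime p)
    (k m : ℤ) (hk0 : 0 ≤ k) (hk1 : k ≤ n) (hm : 0 ≤ m)
    (h1 : 1 / 2 + Real.sqrt (1 + 4 * (((m + 1) * p - n - 1 : ℤ) : ℝ)) / 2 < (k : ℝ))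
    (h2 : (k : ℝ) < Real.sqrt (((m + 1 : ℤ) : ℝ) * (p : ℝ))) :
    k ^ 2 % p + (2 * n - k) ^ 2 % p = 2 * k ^ 2 - k + n - (2 * m + 1) * p := by
  have hsq : (0:ℝ) ≤ Real.sqrt (1 + 4 * (((m + 1) * p - n - 1 : ℤ) : ℝ)) := Real.sqrt_nonneg _
  have hkpos : (0:ℝ) < 2 * (k:ℝ) - 1 := by linarith
  -- lower bound: k^2 - k ≥ (m+1)p - n
  have h1r : (1 + 4 * (((m + 1) * p - n - 1 : ℤ) : ℝ)) < (2 * (k:ℝ) - 1) ^ 2 := by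
    have hs : Real.sqrt (1 + 4 * (((m + 1) * p - n - 1 : ℤ) : ℝ)) < 2 * (k:ℝ) - 1 := by
      linarith
    exact (Real.sqrt_lt' hkpos).mp hs
  have h1z : 1 + 4 * ((m + 1) * p - n - 1) < (2 * k - 1) ^ 2 := by exact_mod_cast h1r
  have hlow : (m + 1) * p - n ≤ k ^ 2 - k := by nlinarith
  -- upper bound: k^2 < (m+1)p
  have hmp : (0:ℝ) ≤ ((m + 1 : ℤ) : ℝ) * (p : ℝ) := by
    have : (0:ℤ) ≤ (m + 1) * p := by nlinarith
    exact_mod_cast this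
  have h2r : ((k:ℝ)) ^ 2 < ((m + 1 : ℤ) : ℝ) * (p : ℝ) := by
    have := (Real.lt_sqrt (by exact_mod_cast hk0)).mp h2
    exact this
  have h2z : k ^ 2 < (m + 1) * p := by exact_mod_cast h2r
  have hppos : (0:ℤ) < p := by omega
  -- first residue
  have e1 : k ^ 2 % p = k ^ 2 - m * p := by
    have key : k ^ 2 % p = (k ^ 2 - m * p) % p := by
      conv_lhs => rw [show k ^ 2 = (k ^ 2 - m * p) + m * p by ring]
      rw [Int.add_mul_emod_self_right]
    rw [key, Int.emod_eq_of_lt (by nlinarith) (by nlinarith)]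
  -- second residue
  have e2 : (2 * n - k) ^ 2 % p = k ^ 2 - k + n - (m + 1) * p := by
    have key : (2 * n - k) ^ 2 % p = (k ^ 2 - k + n - (m + 1) * p) % p := by
      conv_lhs => rw [show (2 * n - k) ^ 2 =
        (k ^ 2 - k + n - (m + 1) * p) + (n - k + m + 1) * p by rw [hp]; ring]
      rw [Int.add_mul_emod_self_right]
    rw [key, Int.emod_eq_of_lt (by nlinarith) (by nlinarith)]
  rw [e1, e2]; ring
end

section
/- Let n be a positive integer such that p = 4n−1 is prime, let M = ⌊n²/p⌋, and for integers m ≥ 0 set Q_m = 1/2 + (1/2)·√(4mp + 3p − 4) and R_m = √(mp). Then for every integer m with 0 ≤ m ≤ M−1 one has R_m < Q_m < R_{m+1}. -/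
/-- Lemma 7(i): with `Q_m = 1/2 + √(4mp + 3p - 4)/2`, `R_m = √(mp)` and
`M = ⌊n²/p⌋`, for every `0 ≤ m ≤ M - 1` one has `R_m < Q_m < R_{m+1}`. -/
theorem stmt_8 (n : ℤ) (hn : 0 < n) (p : ℤ) (hp : p = 4 * n - 1) (hpp : Prime p)
    (M : ℤ) (hM : M = n ^ 2 / p)
    (Q R : ℤ → ℝ)
    (hQ : ∀ m, Q m = 1 / 2 + Real.sqrt (4 * (m : ℝ) * (p : ℝ) + 3 * (p : ℝ) - 4) / 2)
    (hR : ∀ m, R m = Real.sqrt ((m : ℝ) * (p : ℝ)))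
    (m : ℤ) (hm0 : 0 ≤ m) (hm1 : m ≤ M - 1) :
    R m < Q m ∧ Q m < R (m + 1) := by
  have hp3 : (3 : ℤ) ≤ p := by omega
  have hppos : (0 : ℤ) < p := by omega
  -- key integer inequality : (m+1)*p ≤ n^2
  have hMp : M * p ≤ n ^ 2 := by
    rw [hM]
    exact Int.ediv_mul_le _ (by omega)
  have hkey : (m + 1) * p ≤ n ^ 2 := by
    calc (m + 1) * p ≤ M * p := by
          apply mul_le_mul_of_nonneg_right (by omega) (by omega)
      _ ≤ n ^ 2 := hMp
  -- cast to ℝ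
  have hm0R : (0 : ℝ) ≤ (m : ℝ) := by exact_mod_cast hm0
  have hp3R : (3 : ℝ) ≤ (p : ℝ) := by exact_mod_cast hp3
  have hkeyR : ((m : ℝ) + 1) * (p : ℝ) ≤ (n : ℝ) ^ 2 := by exact_mod_cast hkey
  have hpR : (p : ℝ) = 4 * (n : ℝ) - 1 := by exact_mod_cast hp
  set A : ℝ := 4 * (m : ℝ) * (p : ℝ) + 3 * (p : ℝ) - 4 with hA
  have hA0 : (0 : ℝ) ≤ A := by nlinarith
  have hmp0 : (0 : ℝ) ≤ (m : ℝ) * (p : ℝ) := by nlinarith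
  constructor
  · -- R m < Q m
    rw [hR, hQ]
    have h1 : Real.sqrt (4 * ((m : ℝ) * (p : ℝ))) ≤ Real.sqrt A :=
      Real.sqrt_le_sqrt (by nlinarith)
    have h2 : Real.sqrt (4 * ((m : ℝ) * (p : ℝ)))
        = 2 * Real.sqrt ((m : ℝ) * (p : ℝ)) := by
      rw [Real.sqrt_mul (by norm_num) ((m : ℝ) * (p : ℝ)),
        show (4 : ℝ) = 2 ^ 2 by norm_num, Real.sqrt_sq (by norm_num)]
    have := h2 ▸ h1
    linarith
  · -- Q m < R (m+1)
    rw [hQ, hR]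
    push_cast
    -- goal : 1/2 + √A / 2 < √(((m:ℝ)+1) * p)
    have hsA : Real.sqrt A < ((p : ℝ) + 3) / 2 := by
      rw [Real.sqrt_lt' (by linarith)]
      nlinarith
    have hsq : Real.sqrt A ^ 2 = A := Real.sq_sqrt hA0
    have h2 : 1 + Real.sqrt A < Real.sqrt (4 * (((m : ℝ) + 1) * (p : ℝ))) := by
      rw [Real.lt_sqrt (by positivity)]
      have hs0 : 0 ≤ Real.sqrt A := Real.sqrt_nonneg A
      nlinarith
    have h3 : Real.sqrt (4 * (((m : ℝ) + 1) * (p : ℝ)))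
        = 2 * Real.sqrt (((m : ℝ) + 1) * (p : ℝ)) := by
      rw [Real.sqrt_mul (by norm_num) _,
        show (4 : ℝ) = 2 ^ 2 by norm_num, Real.sqrt_sq (by norm_num)]
    rw [h3] at h2
    linarith
end

section
/- Let n be a positive integer such that p = 4n−1 is prime, let M = ⌊n²/p⌋, and for integers m ≥ 0 set Q_m = 1/2 + (1/2)·√(4mp + 3p − 4) and R_m = √(mp). If M ≥ 1, then R_{M−1} < n−1 < Q_M and R_{M−1} < n−2 < Q_{M−1}. -/
/-!
Write `n² = p M + r` with `p = 4n - 1` and `0 ≤ r < p`. Since `16 n² = p (4n + 1) + 1`, we get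
`16 r = p t + 1` with `t = 4n + 1 - 16M`; as `t ≡ 1 [ZMOD 4]` and `0 ≤ t < 16`, in fact `t ≤ 13`,
so `r` is at most about `13p/16`. This forces `r + 6 < p`, except for `t = 13`, `M = 1`, i.e.
`n = 7`, where `p = 27` is not prime. After squaring, each of the four inequalities becomes a linear
bound on `r`, the sharpest one (for `n - 2 < Q_{M-1}`) being exactly `r + 6 < p`.
-/

theorem emod_add_six_lt_of_prime {n M r : ℤ} (hp : Prime (4 * n - 1))
    (hsum : (4 * n - 1) * M + r = n ^ 2) (hr0 : 0 ≤ r) (hrp : r < 4 * n - 1) (hM : 1 ≤ M) :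
    r + 6 < 4 * n - 1 := by
  have hpn : 4 * n - 1 ≤ n ^ 2 := by nlinarith
  have hn : 4 ≤ n := by nlinarith
  set t := 4 * n + 1 - 16 * M with ht_def
  have key : 16 * r = (4 * n - 1) * t + 1 := by linear_combination 16 * hsum
  have ht0 : 0 ≤ t := by nlinarith
  have ht16 : t < 16 := by nlinarith
  obtain ht | ht : t ≤ 9 ∨ t = 13 := by omega
  · have : (4 * n - 1) * t ≤ (4 * n - 1) * 9 := mul_le_mul_of_nonneg_left ht (by omega)
    omega
  · have hM2 : M ≠ 1 := by
      rintro rfl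
      obtain rfl : n = 7 := by omega
      norm_num at hp
    rw [ht] at key
    omega

theorem lt_half_add_sqrt_div_two {a x : ℝ} (h : (2 * a - 1) ^ 2 < x) : a < 1 / 2 + √x / 2 := by
  linarith [Real.lt_sqrt_of_sq_lt h]

section RealBounds

variable {n M r : ℝ} (hsum : (4 * n - 1) * M + r = n ^ 2) (hr0 : 0 ≤ r) (hr : r + 6 < 4 * n - 1)
include hsum hr

include hr0 in
theorem sqrt_sub_one_mul_lt (hM : 1 ≤ M) : √((M - 1) * (4 * n - 1)) < n - 2 := by
  have hn : 2 < n := by nlinarith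
  rw [Real.sqrt_lt' (by linarith)]
  linarith

include hr0 in
theorem sub_one_lt_half_add_sqrt_div_two :
    n - 1 < 1 / 2 + √(4 * M * (4 * n - 1) + 3 * (4 * n - 1) - 4) / 2 :=
  lt_half_add_sqrt_div_two (by nlinarith)

theorem sub_two_lt_half_add_sqrt_div_two :
    n - 2 < 1 / 2 + √(4 * (M - 1) * (4 * n - 1) + 3 * (4 * n - 1) - 4) / 2 :=
  lt_half_add_sqrt_div_two (by nlinarith)

end RealBounds

/-- Lemma 7(ii),(iii): if `M ≥ 1` then `R_{M-1} < n-1 < Q_M` and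
`R_{M-1} < n-2 < Q_{M-1}`. -/
theorem stmt_9 (n : ℤ) (hn : 0 < n) (p : ℤ) (hp : p = 4 * n - 1) (hpp : Prime p)
    (M : ℤ) (hM : M = n ^ 2 / p)
    (Q R : ℤ → ℝ)
    (hQ : ∀ m, Q m = 1 / 2 + Real.sqrt (4 * (m : ℝ) * (p : ℝ) + 3 * (p : ℝ) - 4) / 2)
    (hR : ∀ m, R m = Real.sqrt ((m : ℝ) * (p : ℝ)))
    (hM1 : 1 ≤ M) :
    (R (M - 1) < (n : ℝ) - 1 ∧ ((n : ℝ) - 1 < Q M)) ∧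
    (R (M - 1) < (n : ℝ) - 2 ∧ ((n : ℝ) - 2 < Q (M - 1))) := by
  subst hp
  have hp0 : 0 < 4 * n - 1 := by omega
  have hsum : (4 * n - 1) * M + n ^ 2 % (4 * n - 1) = n ^ 2 := hM ▸ Int.mul_ediv_add_emod _ _
  have hrp := Int.emod_lt_of_pos (n ^ 2) hp0
  have hr0 := Int.emod_nonneg (n ^ 2) hp0.ne'
  set r := n ^ 2 % (4 * n - 1)
  have hr := emod_add_six_lt_of_prime hpp hsum hr0 hrp hM1
  have hsumR : (4 * (n : ℝ) - 1) * M + (r : ℝ) = n ^ 2 := by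
    exact_mod_cast hsum
  have hr0R : (0 : ℝ) ≤ (r : ℝ) := by exact_mod_cast hr0
  have hrR : (r : ℝ) + 6 < 4 * n - 1 := by exact_mod_cast hr
  have hRlt : R (M - 1) < n - 2 := by
    rw [hR]; push_cast
    exact sqrt_sub_one_mul_lt hsumR hr0R hrR (by exact_mod_cast hM1)
  refine ⟨⟨hRlt.trans (by linarith), ?_⟩, hRlt, ?_⟩
  · rw [hQ]; push_cast
    exact sub_one_lt_half_add_sqrt_div_two hsumR hr0R hrR
  · rw [hQ]; push_cast
    exact sub_two_lt_half_add_sqrt_div_two hsumR hrR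
end

section
/- Let n be a positive integer such that p = 4n−1 is prime, let M = ⌊n²/p⌋, and for integers m ≥ 0 set Q_m = 1/2 + (1/2)·√(4mp + 3p − 4) and R_m = √(mp). Then R_M < n < Q_M and R_M < n+1 < Q_{M+1}. -/
/-- Lemma 7(iv),(v): `R_M < n < Q_M` and `R_M < n+1 < Q_{M+1}`. -/
theorem stmt_10 (n : ℤ) (hn : 0 < n) (p : ℤ) (hp : p = 4 * n - 1) (hpp : Prime p)
    (M : ℤ) (hM : M = n ^ 2 / p)
    (Q R : ℤ → ℝ)
    (hQ : ∀ m, Q m = 1 / 2 + Real.sqrt (4 * (m : ℝ) * (p : ℝ) + 3 * (p : ℝ) - 4) / 2)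
    (hR : ∀ m, R m = Real.sqrt ((m : ℝ) * (p : ℝ))) :
    (R M < (n : ℝ) ∧ (n : ℝ) < Q M) ∧
    (R M < (n : ℝ) + 1 ∧ (n : ℝ) + 1 < Q (M + 1)) := by
  have hppos : 0 < p := by omega
  set r : ℤ := n ^ 2 % p with hrdef
  have hr0 : 0 ≤ r := Int.emod_nonneg _ (by omega)
  have hrp : r < p := Int.emod_lt_of_pos _ hppos
  have hdm := Int.mul_ediv_add_emod (n ^ 2) p
  have hMp : M * p = n ^ 2 - r := by rw [hM, mul_comm]; omega
  -- r ≠ 0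
  have hrne0 : r ≠ 0 := by
    intro h
    have hdvd : p ∣ n ^ 2 := Int.dvd_of_emod_eq_zero h
    have : p ∣ n := hpp.dvd_of_dvd_pow hdvd
    have := Int.le_of_dvd hn this
    omega
  -- r ≠ p - 1
  have hrne1 : r ≠ p - 1 := by
    intro h
    set q : ℕ := p.toNat with hqdef
    have hq : (q : ℤ) = p := Int.toNat_of_nonneg (by omega)
    have hqp : q.Prime := by
      rw [Int.prime_iff_natAbs_prime] at hpp
      rwa [show q = p.natAbs by omega]
    haveI : Fact q.Prime := ⟨hqp⟩
    have hcast : ((n : ZMod q)) ^ 2 = -1 := by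
      have hmod : (n ^ 2 : ℤ) ≡ (p - 1 : ℤ) [ZMOD (q : ℤ)] := by
        unfold Int.ModEq
        rw [hq]
        have h2 : (p - 1) % p = p - 1 := Int.emod_eq_of_lt (by omega) (by omega)
        omega
      have := (ZMod.intCast_eq_intCast_iff _ _ _).mpr (by exact_mod_cast hmod)
      push_cast at this
      rw [this, hq.symm]
      simp
    have hsq : IsSquare (-1 : ZMod q) := ⟨(n : ZMod q), by rw [← hcast]; ring⟩
    have h4 : q % 4 ≠ 3 := (ZMod.exists_sq_eq_neg_one_iff).mp hsq
    omega
  have hrle : r ≤ p - 2 := by omega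
  -- integer inequalities
  have hI1 : M * p < n ^ 2 := by omega
  have hI2 : (2 * n - 1) ^ 2 < 4 * M * p + 3 * p - 4 := by nlinarith
  have hI3 : (2 * n + 1) ^ 2 < 4 * (M + 1) * p + 3 * p - 4 := by nlinarith
  have hn' : (1:ℝ) ≤ (n:ℝ) := by exact_mod_cast hn
  have hRM : R M < (n : ℝ) := by
    rw [hR]
    rw [show ((M : ℝ) * (p : ℝ)) = ((M * p : ℤ) : ℝ) by push_cast; ring]
    refine (Real.sqrt_lt' (by exact_mod_cast hn)).mpr ?_
    exact_mod_cast hI1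
  have hQM : (n : ℝ) < Q M := by
    rw [hQ]
    have h1 : (2 * (n : ℝ) - 1) < Real.sqrt (4 * (M : ℝ) * (p : ℝ) + 3 * (p : ℝ) - 4) := by
      rw [show (4 * (M : ℝ) * (p : ℝ) + 3 * (p : ℝ) - 4) = ((4 * M * p + 3 * p - 4 : ℤ) : ℝ) by push_cast; ring]
      refine (Real.lt_sqrt (by linarith [hn'])).mpr ?_
      rw [show (2 * (n : ℝ) - 1) = ((2 * n - 1 : ℤ) : ℝ) by push_cast; ring]
      rw [← Int.cast_pow]
      exact_mod_cast hI2
    linarith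
  have hQM1 : (n : ℝ) + 1 < Q (M + 1) := by
    rw [hQ]
    have h1 : (2 * (n : ℝ) + 1) < Real.sqrt (4 * ((M + 1 : ℤ) : ℝ) * (p : ℝ) + 3 * (p : ℝ) - 4) := by
      rw [show (4 * ((M + 1 : ℤ) : ℝ) * (p : ℝ) + 3 * (p : ℝ) - 4) = ((4 * (M + 1) * p + 3 * p - 4 : ℤ) : ℝ) by push_cast; ring]
      refine (Real.lt_sqrt (by linarith [hn'])).mpr ?_
      rw [show (2 * (n : ℝ) + 1) = ((2 * n + 1 : ℤ) : ℝ) by push_cast; ring]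
      rw [← Int.cast_pow]
      exact_mod_cast hI3
    linarith
  exact ⟨⟨hRM, hQM⟩, ⟨by linarith, hQM1⟩⟩
end

section
/- Let n be a positive integer such that p = 4n−1 is prime, let M = ⌊n²/p⌋, and for integers m ≥ 0 set Q_m = 1/2 + (1/2)·√(4mp + 3p − 4) and R_m = √(mp), and let r = r_p(n²). If M ≥ 1, then n−1 < Q_{M−1} if and only if r < 2n−3. -/
/-- Lemma 7(viii), last claim: if `M ≥ 1` then `n - 1 < Q_{M-1} ↔ r < 2n - 3`. -/
theorem stmt_12 (n : ℤ) (hn : 0 < n) (p : ℤ) (hp : p = 4 * n - 1) (hpp : Prime p)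
    (M : ℤ) (hM : M = n ^ 2 / p)
    (Q R : ℤ → ℝ)
    (hQ : ∀ m, Q m = 1 / 2 + Real.sqrt (4 * (m : ℝ) * (p : ℝ) + 3 * (p : ℝ) - 4) / 2)
    (hR : ∀ m, R m = Real.sqrt ((m : ℝ) * (p : ℝ)))
    (r : ℤ) (hr : r = n ^ 2 % p) (hM1 : 1 ≤ M) :
    (n : ℝ) - 1 < Q (M - 1) ↔ r < 2 * n - 3 := by
  subst hp
  have hp0 : (0:ℤ) < 4 * n - 1 := by omega
  have hple : 4 * n - 1 ≤ n ^ 2 := by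
    have h := (Int.le_ediv_iff_mul_le hp0).mp (hM ▸ hM1)
    linarith
  have hn4 : 4 ≤ n := by
    by_contra h
    push_neg at h
    nlinarith [mul_nonneg (by linarith : (0:ℤ) ≤ n - 1) (by linarith : (0:ℤ) ≤ 3 - n)]
  have key : n ^ 2 = (4 * n - 1) * M + r := by
    rw [hM, hr]; exact (Int.mul_ediv_add_emod _ _).symm
  have keyR : (n:ℝ) ^ 2 = (4 * (n:ℝ) - 1) * (M:ℝ) + (r:ℝ) := by exact_mod_cast key
  have hA : 4 * ((M - 1 : ℤ) : ℝ) * ((4 * n - 1 : ℤ) : ℝ) + 3 * ((4 * n - 1 : ℤ) : ℝ) - 4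
      = ((4 * n ^ 2 - 4 * n - 3 - 4 * r : ℤ) : ℝ) := by
    push_cast
    linear_combination (-4) * keyR
  rw [hQ, hA]
  have h23 : (0:ℝ) ≤ ((2 * n - 3 : ℤ) : ℝ) := by
    have : (0:ℤ) ≤ 2 * n - 3 := by omega
    exact_mod_cast this
  constructor
  · intro h
    have h2 : ((2 * n - 3 : ℤ) : ℝ) < Real.sqrt ((4 * n ^ 2 - 4 * n - 3 - 4 * r : ℤ) : ℝ) := by
      push_cast at h ⊢; linarith
    have h3 := (Real.lt_sqrt h23).mp h2
    have h4 : (2 * n - 3) ^ 2 < 4 * n ^ 2 - 4 * n - 3 - 4 * r := by exact_mod_cast h3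
    nlinarith
  · intro h
    have h4 : (2 * n - 3) ^ 2 < 4 * n ^ 2 - 4 * n - 3 - 4 * r := by nlinarith
    have h3 : ((2 * n - 3 : ℤ) : ℝ) ^ 2 < ((4 * n ^ 2 - 4 * n - 3 - 4 * r : ℤ) : ℝ) := by
      exact_mod_cast h4
    have h2 := (Real.lt_sqrt h23).mpr h3
    push_cast at h2 ⊢
    linarith
end

section
/- Let n be a positive integer such that p = 4n−1 is prime, let M = ⌊n²/p⌋, and for integers m ≥ 0 set Q_m = 1/2 + (1/2)·√(4mp + 3p − 4) and R_m = √(mp), and let r = r_p(n²). Then Q_M < R_{M+1} if and only if 2n−2 < r. -/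
/-- Lemma 7(x): `Q_M < R_{M+1} ↔ 2n - 2 < r` where `r = r_p(n²)`. -/
theorem stmt_13 (n : ℤ) (hn : 0 < n) (p : ℤ) (hp : p = 4 * n - 1) (hpp : Prime p)
    (M : ℤ) (hM : M = n ^ 2 / p)
    (Q R : ℤ → ℝ)
    (hQ : ∀ m, Q m = 1 / 2 + Real.sqrt (4 * (m : ℝ) * (p : ℝ) + 3 * (p : ℝ) - 4) / 2)
    (hR : ∀ m, R m = Real.sqrt ((m : ℝ) * (p : ℝ)))
    (r : ℤ) (hr : r = n ^ 2 % p) :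
    Q M < R (M + 1) ↔ 2 * n - 2 < r := by
  have hp3 : (3:ℤ) ≤ p := by omega
  have hM0 : 0 ≤ M := by
    rw [hM]; exact Int.ediv_nonneg (by positivity) (by omega)
  have h1 : M * p + r = n ^ 2 := by
    rw [hM, hr, mul_comm]; exact Int.mul_ediv_add_emod _ _
  have hpn : p + 1 = 4 * n := by omega
  have key : 16 * M * p = (p + 1) ^ 2 - 16 * r := by
    linear_combination 16 * h1 - (p + 1 + 4 * n) * hpn
  have hiff : 16 * M * p < p ^ 2 - 6 * p + 25 ↔ 2 * n - 2 < r := by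
    constructor <;> intro h <;> nlinarith [key]
  rw [hQ, hR]
  push_cast
  have hpR : (3:ℝ) ≤ (p:ℝ) := by exact_mod_cast hp3
  have hMR : (0:ℝ) ≤ (M:ℝ) := by exact_mod_cast hM0
  have ha0 : (0:ℝ) ≤ 4 * (M:ℝ) * p + 3 * p - 4 := by nlinarith
  have hb0 : (0:ℝ) ≤ ((M:ℝ) + 1) * p := by nlinarith
  set x := Real.sqrt (4 * (M:ℝ) * p + 3 * p - 4) with hxdef
  set y := Real.sqrt (((M:ℝ) + 1) * p) with hydef
  have hx0 : 0 ≤ x := Real.sqrt_nonneg _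
  have hy0 : 0 ≤ y := Real.sqrt_nonneg _
  have hx2 : x ^ 2 = 4 * (M:ℝ) * p + 3 * p - 4 := Real.sq_sqrt ha0
  have hy2 : y ^ 2 = ((M:ℝ) + 1) * p := Real.sq_sqrt hb0
  rw [← hiff]
  constructor
  · intro h
    have h1' : 1 + x < 2 * y := by linarith
    have h2 : (1 + x) ^ 2 < (2 * y) ^ 2 := by nlinarith
    have h3 : 2 * x < (p:ℝ) + 3 := by nlinarith
    have h4 : (2 * x) ^ 2 < ((p:ℝ) + 3) ^ 2 := by nlinarith
    have : 16 * (M:ℝ) * p < (p:ℝ) ^ 2 - 6 * p + 25 := by nlinarith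
    exact_mod_cast this
  · intro h
    have hR' : 16 * (M:ℝ) * p < (p:ℝ) ^ 2 - 6 * p + 25 := by exact_mod_cast h
    have h3 : x < ((p:ℝ) + 3) / 2 := by nlinarith
    have h2 : (1 + x) ^ 2 < (2 * y) ^ 2 := by nlinarith
    have h1' : 1 + x < 2 * y := lt_of_pow_lt_pow_left₀ 2 (by positivity) h2
    linarith
end

section
/- Let n be a positive integer such that p = 4n−1 is prime, let M = ⌊n²/p⌋, and for integers m ≥ 0 set Q_m = 1/2 + (1/2)·√(4mp + 3p − 4) and R_m = √(mp). If M ≥ 1, then either ⌊Q_M⌋ = ⌊R_{M+1}⌋ = n+1 or ⌊Q_M⌋ = ⌊R_{M+1}⌋ = n. -/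
lemma floor_sqrt_eq (a : ℤ) (x : ℝ) (ha : 0 ≤ a) (h1 : ((a:ℝ))^2 ≤ x)
    (h2 : x < ((a:ℝ)+1)^2) : ⌊Real.sqrt x⌋ = a := by
  have hx : 0 ≤ x := le_trans (by positivity) h1
  rw [Int.floor_eq_iff]
  constructor
  · have : (a:ℝ) = Real.sqrt ((a:ℝ)^2) := (Real.sqrt_sq (by exact_mod_cast ha)).symm
    rw [this]
    exact Real.sqrt_le_sqrt h1
  · have h3 := Real.sqrt_lt_sqrt hx h2
    have ha' : (0:ℝ) ≤ (a:ℝ) + 1 := by positivity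
    rwa [Real.sqrt_sq ha'] at h3

/-- Lemma 8(ii): if `M ≥ 1` then either `⌊Q_M⌋ = ⌊R_{M+1}⌋ = n+1` or
`⌊Q_M⌋ = ⌊R_{M+1}⌋ = n`. -/
theorem stmt_15 (n : ℤ) (hn : 0 < n) (p : ℤ) (hp : p = 4 * n - 1) (hpp : Prime p)
    (M : ℤ) (hM : M = n ^ 2 / p)
    (Q R : ℤ → ℝ)
    (hQ : ∀ m, Q m = 1 / 2 + Real.sqrt (4 * (m : ℝ) * (p : ℝ) + 3 * (p : ℝ) - 4) / 2)
    (hR : ∀ m, R m = Real.sqrt ((m : ℝ) * (p : ℝ)))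
    (hM1 : 1 ≤ M) :
    (⌊Q M⌋ = n + 1 ∧ ⌊R (M + 1)⌋ = n + 1) ∨
    (⌊Q M⌋ = n ∧ ⌊R (M + 1)⌋ = n) := by
  set s := n ^ 2 % p with hsdef
  have hp0 : (0:ℤ) < p := by omega
  have hdiv : p * M + s = n ^ 2 := by rw [hM, hsdef]; exact Int.mul_ediv_add_emod _ _
  have hs0 : 0 ≤ s := Int.emod_nonneg _ (by omega)
  have hsp : s < p := Int.emod_lt_of_pos _ hp0
  have hr : (p:ℝ) * (M:ℝ) + (s:ℝ) = (n:ℝ)^2 := by exact_mod_cast hdiv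
  have hpr : (p:ℝ) = 4 * (n:ℝ) - 1 := by exact_mod_cast hp
  have hn' : (1:ℝ) ≤ (n:ℝ) := by exact_mod_cast hn
  -- rewrite Q M
  have hQM : Q M = 1/2 + Real.sqrt (((4*n^2 + 12*n - 7 - 4*s : ℤ) : ℝ)) / 2 := by
    rw [hQ, show (4*(M:ℝ)*(p:ℝ) + 3*(p:ℝ) - 4) = ((4*n^2 + 12*n - 7 - 4*s : ℤ) : ℝ) by
      push_cast; linear_combination 4 * hr + 3 * hpr]
  -- rewrite R (M+1)
  have hRM : R (M+1) = Real.sqrt (((n^2 + 4*n - 1 - s : ℤ) : ℝ)) := by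
    rw [hR, show (((M+1:ℤ)):ℝ) * (p:ℝ) = ((n^2 + 4*n - 1 - s : ℤ) : ℝ) by
      push_cast; linear_combination hr + hpr]
  by_cases hcase : s ≤ 2*n - 2
  · left
    constructor
    · rw [hQM]
      have h1 : ((2*n+1:ℤ):ℝ)^2 ≤ ((4*n^2 + 12*n - 7 - 4*s : ℤ) : ℝ) := by
        exact_mod_cast (by nlinarith : ((2*n+1:ℤ))^2 ≤ 4*n^2 + 12*n - 7 - 4*s)
      have h2 : ((4*n^2 + 12*n - 7 - 4*s : ℤ) : ℝ) < ((2*n+3:ℤ):ℝ)^2 := by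
        exact_mod_cast (by nlinarith : (4*n^2 + 12*n - 7 - 4*s : ℤ) < (2*n+3)^2)
      have hlo : ((2*n+1:ℤ):ℝ) ≤ Real.sqrt (((4*n^2 + 12*n - 7 - 4*s : ℤ) : ℝ)) := by
        have : ((2*n+1:ℤ):ℝ) = Real.sqrt (((2*n+1:ℤ):ℝ)^2) :=
          (Real.sqrt_sq (by push_cast; linarith)).symm
        rw [this]; exact Real.sqrt_le_sqrt h1
      have hhi : Real.sqrt (((4*n^2 + 12*n - 7 - 4*s : ℤ) : ℝ)) < ((2*n+3:ℤ):ℝ) := by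
        have h3 := Real.sqrt_lt_sqrt (le_trans (by positivity) h1) h2
        rwa [Real.sqrt_sq (by push_cast; linarith)] at h3
      rw [Int.floor_eq_iff]
      constructor
      · push_cast at hlo ⊢; linarith
      · push_cast at hhi ⊢; linarith
    · rw [hRM]
      apply floor_sqrt_eq _ _ (by omega)
      · exact_mod_cast (by nlinarith : ((n+1:ℤ))^2 ≤ n^2 + 4*n - 1 - s)
      · have : ((n+1:ℤ):ℝ) + 1 = ((n+2:ℤ):ℝ) := by push_cast; ring
        rw [this]
        exact_mod_cast (by nlinarith : (n^2 + 4*n - 1 - s : ℤ) < (n+2)^2)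
  · right
    have hcase' : 2*n - 1 ≤ s := by omega
    constructor
    · rw [hQM]
      have h1 : ((2*n-1:ℤ):ℝ)^2 ≤ ((4*n^2 + 12*n - 7 - 4*s : ℤ) : ℝ) := by
        exact_mod_cast (by nlinarith : ((2*n-1:ℤ))^2 ≤ 4*n^2 + 12*n - 7 - 4*s)
      have h2 : ((4*n^2 + 12*n - 7 - 4*s : ℤ) : ℝ) < ((2*n+1:ℤ):ℝ)^2 := by
        exact_mod_cast (by nlinarith : (4*n^2 + 12*n - 7 - 4*s : ℤ) < (2*n+1)^2)
      have hlo : ((2*n-1:ℤ):ℝ) ≤ Real.sqrt (((4*n^2 + 12*n - 7 - 4*s : ℤ) : ℝ)) := by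
        have : ((2*n-1:ℤ):ℝ) = Real.sqrt (((2*n-1:ℤ):ℝ)^2) :=
          (Real.sqrt_sq (by push_cast; linarith)).symm
        rw [this]; exact Real.sqrt_le_sqrt h1
      have hhi : Real.sqrt (((4*n^2 + 12*n - 7 - 4*s : ℤ) : ℝ)) < ((2*n+1:ℤ):ℝ) := by
        have h3 := Real.sqrt_lt_sqrt (le_trans (by positivity) h1) h2
        rwa [Real.sqrt_sq (by push_cast; linarith)] at h3
      rw [Int.floor_eq_iff]
      constructor
      · push_cast at hlo ⊢; linarith
      · push_cast at hhi ⊢; linarith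
    · rw [hRM]
      apply floor_sqrt_eq _ _ (by omega)
      · exact_mod_cast (by nlinarith : ((n:ℤ))^2 ≤ n^2 + 4*n - 1 - s)
      · rw [show ((n:ℝ)) + 1 = ((n+1:ℤ):ℝ) by push_cast; ring]
        exact_mod_cast (by nlinarith : (n^2 + 4*n - 1 - s : ℤ) < (n+1)^2)
end

section
/- Let n > 1 be an integer such that p = 4n−1 is prime, let M = ⌊n²/p⌋, and for integers m ≥ 0 set Q_m = 1/2 + (1/2)·√(4mp + 3p − 4) and R_m = √(mp). Then (1/2)·∑_{k=1}^{p−1} r_p(k²) = −p·∑_{m=0}^{M−1} (2m+1)·(⌊R_{m+1}⌋ − ⌊Q_m⌋) − 2p·∑_{m=0}^{M−1} m·(⌊Q_m⌋ − ⌊R_m⌋) + (4n³ + 3n² − n)/6 − M·p·(2n − 1 − 2⌊Q_{M−1}⌋), where for M = 0 the sums are empty and the final term vanishes. -/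
/-!
Pairing `k` with `p - k` halves the sum to `1 ≤ k ≤ 2n - 1`, where `r_p(k²) = k² - p⌊k²/p⌋`.
For `k = 2n - j > n` one has `(2n - j)² = (n - j)p + j(j - 1) + n`, so the floor sum becomes
`∑_{k ≤ n} ⌊k²/p⌋ + n(n - 1)/2 + ∑_{j < n} ⌊(j(j - 1) + n)/p⌋`, and every floor occurring here
is at most `M`. Counting lattice points row by row (`(m + 1)p ≤ …` for `m < M`) turns the two
floor sums into `∑_{m<M} (n - ⌊R_{m+1}⌋)` and `∑_{m<M} (n - 1 - ⌊Q_m⌋)`; summation by parts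
gives the stated shape once `⌊Q_{M-1}⌋ = ⌊R_M⌋`. That last equality comes from
`16 n² ≡ 1 (mod p)`, which leaves no room for `Mp` just above a perfect square.
-/

open Finset

section IntervalSums

variable {M : Type*} [AddCommMonoid M]

theorem Int.sum_Icc_succ_top {a b : ℤ} (hab : a ≤ b + 1) (f : ℤ → M) :
    ∑ k ∈ Icc a (b + 1), f k = ∑ k ∈ Icc a b, f k + f (b + 1) := by
  rw [← insert_Icc_right_eq_Icc_add_one hab, sum_insert (by simp), add_comm]

theorem Int.sum_Icc_consecutive {a b c : ℤ} (hab : a ≤ b + 1) (hbc : b ≤ c) (f : ℤ → M) :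
    ∑ k ∈ Icc a c, f k = ∑ k ∈ Icc a b, f k + ∑ k ∈ Icc (b + 1) c, f k := by
  rw [← sum_union (disjoint_left.2 fun k hk hk' => by simp only [mem_Icc] at hk hk'; omega)]
  congr 1
  ext k
  simp only [mem_union, mem_Icc]
  omega

theorem Int.sum_Icc_reflect (f : ℤ → M) (a b c : ℤ) :
    ∑ k ∈ Icc a b, f (c - k) = ∑ k ∈ Icc (c - b) (c - a), f k :=
  sum_nbij' (c - ·) (c - ·) (fun k hk => by simp only [mem_Icc] at hk ⊢; omega)
    (fun k hk => by simp only [mem_Icc] at hk ⊢; omega) (fun k _ => sub_sub_cancel c k)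
    (fun k _ => sub_sub_cancel c k) (fun _ _ => rfl)

theorem Int.sum_Icc_two_mul_of_reflect {N : ℤ} (hN : 0 ≤ N) (f : ℤ → M)
    (hf : ∀ k, f (2 * N + 1 - k) = f k) :
    ∑ k ∈ Icc 1 (2 * N), f k = 2 • ∑ k ∈ Icc 1 N, f k := by
  rw [Int.sum_Icc_consecutive (b := N) (by omega) (by omega), two_nsmul]
  congr 1
  calc ∑ k ∈ Icc (N + 1) (2 * N), f k = ∑ k ∈ Icc (2 * N + 1 - N) (2 * N + 1 - 1), f k := by
        congr 2 <;> ring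
    _ = ∑ k ∈ Icc 1 N, f k := by rw [← Int.sum_Icc_reflect]; exact sum_congr rfl fun k _ => hf k

theorem Int.sum_Icc_sub_telescope {G : Type*} [AddCommGroup G] (g : ℤ → G) {K : ℤ}
    (hK : 0 ≤ K) :
    ∑ m ∈ Icc 0 (K - 1), (g (m + 1) - g m) = g K - g 0 := by
  induction K, hK using Int.leInduction with
  | base => simp
  | succ K hK ih =>
    rw [add_sub_cancel_right, Int.sum_Icc_consecutive (b := K - 1) (by omega) (by omega), ih,
      sub_add_cancel, Icc_self, sum_singleton]
    abel

end IntervalSums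

theorem Int.two_mul_sum_Icc_id {N : ℤ} (hN : 0 ≤ N) : 2 * ∑ k ∈ Icc 1 N, k = N * (N + 1) := by
  induction N, hN using Int.leInduction with
  | base => simp
  | succ N hN ih => rw [Int.sum_Icc_succ_top (by omega), mul_add, ih]; ring

theorem Int.six_mul_sum_Icc_sq {N : ℤ} (hN : 0 ≤ N) :
    6 * ∑ k ∈ Icc 1 N, k ^ 2 = N * (N + 1) * (2 * N + 1) := by
  induction N, hN using Int.leInduction with
  | base => simp
  | succ N hN ih => rw [Int.sum_Icc_succ_top (by omega), mul_add, ih]; ring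

theorem card_filter_Icc_eq_sub {N s : ℤ} {P : ℤ → Prop} [DecidablePred P] (hs : 0 ≤ s)
    (hsN : s ≤ N) (hP : ∀ k ∈ Icc 1 N, P k ↔ s < k) : (#{k ∈ Icc 1 N | P k} : ℤ) = N - s := by
  have : {k ∈ Icc 1 N | P k} = Icc (s + 1) N := by
    ext k
    simp only [mem_filter, mem_Icc]
    constructor
    · rintro ⟨hk, hPk⟩
      exact ⟨(hP k (mem_Icc.2 hk)).1 hPk, hk.2⟩
    · rintro ⟨hsk, hkN⟩
      exact ⟨⟨by omega, hkN⟩, (hP k (mem_Icc.2 ⟨by omega, hkN⟩)).2 hsk⟩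
  rw [this, Int.card_Icc_of_le _ _ (by omega)]
  ring

theorem sum_ediv_eq_sum_card_filter {s : Finset ℤ} {f : ℤ → ℤ} {p T : ℤ} (hp : 0 < p)
    (hf : ∀ k ∈ s, 0 ≤ f k ∧ f k < (T + 1) * p) :
    ∑ k ∈ s, f k / p = ∑ m ∈ Icc 0 (T - 1), (#{k ∈ s | (m + 1) * p ≤ f k} : ℤ) := by
  have hcount : ∀ k ∈ s, f k / p = #{m ∈ Icc 0 (T - 1) | (m + 1) * p ≤ f k} := by
    intro k hk
    obtain ⟨h0, hT⟩ := hf k hk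
    have hq0 : 0 ≤ f k / p := Int.ediv_nonneg h0 hp.le
    have hqT : f k / p < T + 1 := (Int.ediv_lt_iff_lt_mul hp).2 hT
    have : {m ∈ Icc 0 (T - 1) | (m + 1) * p ≤ f k} = Icc 0 (f k / p - 1) := by
      ext m
      simp only [mem_filter, mem_Icc, ← Int.le_ediv_iff_mul_le hp]
      omega
    rw [this, Int.card_Icc_of_le _ _ (by omega)]
    ring
  simp only [sum_congr rfl hcount, card_filter, Nat.cast_sum, Nat.cast_ite, Nat.cast_one,
    Nat.cast_zero]
  exact sum_comm

theorem floor_sqrt_lt_iff {x : ℝ} {k : ℤ} (hx : 0 ≤ x) (hk : 0 ≤ k) :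
    ⌊√x⌋ < k ↔ x < k ^ 2 := by
  rw [Int.floor_lt, Real.sqrt_lt hx (by exact_mod_cast hk)]

theorem floor_half_add_sqrt_div_two_lt_iff {x : ℝ} {j : ℤ} (hx : 0 ≤ x) (hj : 1 ≤ j) :
    ⌊1 / 2 + √x / 2⌋ < j ↔ x < (2 * j - 1) ^ 2 := by
  have : (0 : ℝ) ≤ 2 * j - 1 := by
    have : (1 : ℝ) ≤ j := by exact_mod_cast hj
    linarith
  rw [Int.floor_lt, ← Real.sqrt_lt hx this]
  constructor <;> intro h <;> linarith

theorem not_dvd_sq_of_lt {p k : ℤ} (hp : Prime p) (hk : 0 < k) (hkp : k < p) : ¬ p ∣ k ^ 2 :=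
  fun h => absurd (Int.le_of_dvd hk (hp.dvd_of_dvd_pow h)) (not_le.2 hkp)

theorem le_thirteen_of_prime_dvd {p d β : ℤ} (hp : Prime p) (hd : 1 ≤ d) (hd2 : d ≤ 2) (hβ : 0 ≤ β)
    (hβd : β ≤ d) (h : p ∣ (4 * d - 1) ^ 2 + 16 * β) : p ≤ 13 := by
  have key : ∀ q : ℤ, 0 < q → q ≤ 13 → p ∣ q → p ≤ 13 :=
    fun q hq hq13 h => (Int.le_of_dvd hq h).trans hq13
  interval_cases d <;> interval_cases β <;> norm_num at h
  · exact key 3 (by norm_num) (by norm_num) (hp.dvd_of_dvd_pow (n := 2) (by norm_num [h]))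
  · exact key 5 (by norm_num) (by norm_num) (hp.dvd_of_dvd_pow (n := 2) (by norm_num [h]))
  · exact key 7 (by norm_num) (by norm_num) (hp.dvd_of_dvd_pow (n := 2) (by norm_num [h]))
  · exact (hp.dvd_or_dvd (show p ∣ 5 * 13 by norm_num [h])).elim
      (key 5 (by norm_num) (by norm_num)) (key 13 (by norm_num) (by norm_num))
  · exact key 3 (by norm_num) (by norm_num) (hp.dvd_of_dvd_pow (n := 4) (by norm_num [h]))

section

variable {n p : ℤ}

/-- Since `16n² ≡ 1 (mod p)`, `p` divides `(4(n - s) - 1)² + 16(Mp - s²)`; if the claim failed,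
then `n - s ≤ 2` and `Mp - s² ≤ n - s`, so this number would be one of `9, 25, 49, 65, 81`. -/
theorem mul_pred_add_lt_mul {M s : ℤ} (hp : p = 4 * n - 1) (hpp : Prime p) (hM : 0 < M)
    (hMn : M * p < n ^ 2) (hnM : n ^ 2 < (M + 1) * p) (hs0 : 0 ≤ s) (hs : s ^ 2 ≤ M * p)
    (hs' : M * p < (s + 1) ^ 2) : s * (s - 1) + n < M * p := by
  by_contra! h
  have hp0 : 0 < p := by nlinarith
  have hpM : p ≤ M * p := le_mul_of_one_le_left hp0.le hM
  have hn4 : 4 ≤ n := by nlinarith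
  have hsn : s < n := by nlinarith
  have hs3 : 3 ≤ s := by nlinarith
  have hd : n - s ≤ 2 := by
    by_contra! hd
    nlinarith [mul_nonneg (by omega : (0 : ℤ) ≤ n - s - 3) (by omega : (0 : ℤ) ≤ s - 3)]
  have hdvd : p ∣ (4 * (n - s) - 1) ^ 2 + 16 * (M * p - s ^ 2) :=
    ⟨p - 8 * s + 16 * M, by subst hp; ring⟩
  have := le_thirteen_of_prime_dvd hpp (by omega) hd (by omega) (by nlinarith) hdvd
  omega

theorem sq_ediv_mul_lt (hp : p = 4 * n - 1) (hpp : Prime p) (hn : 1 < n) : n ^ 2 / p * p < n ^ 2 :=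
  lt_of_le_of_ne (Int.ediv_mul_le _ (by omega)) fun h =>
    not_dvd_sq_of_lt hpp (by omega) (by omega) (Dvd.intro_left _ h)

/-! `σ m` and `κ m` stand for `⌊R_m⌋ = ⌊√(mp)⌋` and `⌊Q_m⌋`; they enter only through `hσ` and
`hκ`, which determine them as these floors. -/

variable {σ κ : ℤ → ℤ}

theorem sum_Icc_sq_ediv (hp : p = 4 * n - 1) (hpp : Prime p) (hn : 1 < n)
    (hσ : ∀ m k, 0 ≤ m → 0 ≤ k → (m * p < k ^ 2 ↔ σ m < k)) :
    ∑ k ∈ Icc 1 n, k ^ 2 / p = ∑ m ∈ Icc 0 (n ^ 2 / p - 1), (n - σ (m + 1)) := by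
  have hp0 : 0 < p := by omega
  have hMn := sq_ediv_mul_lt hp hpp hn
  rw [sum_ediv_eq_sum_card_filter hp0 fun k hk => ?bound]
  case bound =>
    rw [mem_Icc] at hk
    exact ⟨sq_nonneg k, by nlinarith [Int.lt_ediv_add_one_mul_self (n ^ 2) hp0]⟩
  refine sum_congr rfl fun m hm => card_filter_Icc_eq_sub ?_ ?_ fun k hk => ?_
  all_goals rw [mem_Icc] at hm
  · exact not_lt.1 fun h => by nlinarith [(hσ (m + 1) 0 (by omega) le_rfl).2 h]
  · exact Int.lt_add_one_iff.1 ((hσ (m + 1) (n + 1) (by omega) (by omega)).1 (by nlinarith))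
  · rw [mem_Icc] at hk
    rw [← hσ (m + 1) k (by omega) (by omega), le_iff_lt_or_eq, or_iff_left]
    exact fun h => not_dvd_sq_of_lt hpp (by omega) (by omega) (Dvd.intro_left _ h)

theorem sum_Icc_mul_pred_add_ediv (hp : p = 4 * n - 1) (hn : 1 < n)
    (hκ : ∀ m j, 0 ≤ m → 1 ≤ j → (m * p + 3 * n - 2 < j * (j - 1) ↔ κ m < j)) :
    ∑ j ∈ Icc 1 (n - 1), (j * (j - 1) + n) / p = ∑ m ∈ Icc 0 (n ^ 2 / p - 1), (n - 1 - κ m) := by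
  have hp0 : 0 < p := by omega
  have hMn : n ^ 2 / p * p ≤ n ^ 2 := Int.ediv_mul_le _ hp0.ne'
  rw [sum_ediv_eq_sum_card_filter hp0 fun j hj => ?bound]
  case bound =>
    rw [mem_Icc] at hj
    exact ⟨by nlinarith, by nlinarith [Int.lt_ediv_add_one_mul_self (n ^ 2) hp0]⟩
  refine sum_congr rfl fun m hm => card_filter_Icc_eq_sub ?_ ?_ fun j hj => ?_
  all_goals rw [mem_Icc] at hm
  · exact not_lt.1 fun h => by nlinarith [(hκ m 1 hm.1 le_rfl).2 (by omega)]
  · exact Int.le_sub_one_of_lt ((hκ m n hm.1 (by omega)).1 (by nlinarith))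
  · rw [mem_Icc] at hj
    rw [← hκ m j hm.1 hj.1, add_one_mul]
    omega

theorem two_mul_sum_Icc_sq_ediv (hp : p = 4 * n - 1) (hn : 1 < n) :
    2 * ∑ k ∈ Icc 1 (2 * n - 1), k ^ 2 / p =
      2 * ∑ k ∈ Icc 1 n, k ^ 2 / p + n * (n - 1)
        + 2 * ∑ j ∈ Icc 1 (n - 1), (j * (j - 1) + n) / p := by
  have hp0 : 0 < p := by omega
  have hreflect : ∑ k ∈ Icc (n + 1) (2 * n - 1), k ^ 2 / p =
      ∑ j ∈ Icc 1 (n - 1), ((n - j) + (j * (j - 1) + n) / p) := by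
    calc ∑ k ∈ Icc (n + 1) (2 * n - 1), k ^ 2 / p
        = ∑ k ∈ Icc (2 * n - (n - 1)) (2 * n - 1), k ^ 2 / p := by congr 2; ring
      _ = ∑ j ∈ Icc 1 (n - 1), (2 * n - j) ^ 2 / p := (Int.sum_Icc_reflect _ _ _ _).symm
      _ = _ := sum_congr rfl fun j _ => by
        rw [show (2 * n - j) ^ 2 = j * (j - 1) + n + (n - j) * p by subst hp; ring,
          Int.add_mul_ediv_right _ _ hp0.ne', add_comm]
  have hgauss : 2 * ∑ j ∈ Icc 1 (n - 1), (n - j) = n * (n - 1) := by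
    rw [Int.sum_Icc_reflect (fun j => j), show n - (n - 1) = 1 by ring,
      Int.two_mul_sum_Icc_id (by omega)]
    ring
  rw [Int.sum_Icc_consecutive (b := n) (by omega) (by omega), hreflect, sum_add_distrib]
  linear_combination hgauss

theorem kappa_pred_eq_sigma (hp : p = 4 * n - 1) (hpp : Prime p) (hn : 1 < n)
    (hσ : ∀ m k, 0 ≤ m → 0 ≤ k → (m * p < k ^ 2 ↔ σ m < k))
    (hκ : ∀ m j, 0 ≤ m → 1 ≤ j → (m * p + 3 * n - 2 < j * (j - 1) ↔ κ m < j))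
    (hM : 0 < n ^ 2 / p) : κ (n ^ 2 / p - 1) = σ (n ^ 2 / p) := by
  set M := n ^ 2 / p
  have hp0 : 0 < p := by omega
  have hMn : M * p < n ^ 2 := sq_ediv_mul_lt hp hpp hn
  have hnM : n ^ 2 < (M + 1) * p := Int.lt_ediv_add_one_mul_self _ hp0
  set s := σ M
  have hs0 : 0 ≤ s := not_lt.1 fun h => by nlinarith [(hσ M 0 hM.le le_rfl).2 h]
  have hs : s ^ 2 ≤ M * p := not_lt.1 fun h => lt_irrefl s ((hσ M s hM.le hs0).1 h)
  have hs' : M * p < (s + 1) ^ 2 := (hσ M (s + 1) hM.le (by omega)).2 (lt_add_one s)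
  have hsn : s < n := (hσ M n hM.le (by omega)).1 hMn
  have hs1 : 1 ≤ s := by nlinarith
  apply le_antisymm
  · rw [← Int.lt_add_one_iff, ← hκ (M - 1) (s + 1) (by omega) (by omega)]
    nlinarith
  · rw [← not_lt, ← hκ (M - 1) s (by omega) hs1]
    have := mul_pred_add_lt_mul hp hpp hM hMn hnM hs0 hs hs'
    linarith

theorem three_mul_sum_Icc_sq_emod (hp : p = 4 * n - 1) (hpp : Prime p) (hn : 1 < n)
    (hσ : ∀ m k, 0 ≤ m → 0 ≤ k → (m * p < k ^ 2 ↔ σ m < k))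
    (hκ : ∀ m j, 0 ≤ m → 1 ≤ j → (m * p + 3 * n - 2 < j * (j - 1) ↔ κ m < j)) :
    3 * ∑ k ∈ Icc 1 (p - 1), k ^ 2 % p =
      -6 * p * ∑ m ∈ Icc 0 (n ^ 2 / p - 1), (2 * m + 1) * (σ (m + 1) - κ m)
      - 12 * p * ∑ m ∈ Icc 0 (n ^ 2 / p - 1), m * (κ m - σ m)
      + (4 * n ^ 3 + 3 * n ^ 2 - n)
      - 6 * (n ^ 2 / p) * p * (2 * n - 1 - 2 * κ (n ^ 2 / p - 1)) := by
  have hpair : ∑ k ∈ Icc 1 (p - 1), k ^ 2 % p = 2 * ∑ k ∈ Icc 1 (2 * n - 1), k ^ 2 % p := by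
    rw [show p - 1 = 2 * (2 * n - 1) by omega, Int.sum_Icc_two_mul_of_reflect (by omega),
      nsmul_eq_mul, Nat.cast_ofNat]
    intro k
    rw [show (2 * (2 * n - 1) + 1 - k) ^ 2 = k ^ 2 + (p - 2 * k) * p by subst hp; ring,
      Int.add_mul_emod_self_right]
  have hmod : ∑ k ∈ Icc 1 (2 * n - 1), k ^ 2 % p =
      ∑ k ∈ Icc 1 (2 * n - 1), k ^ 2 - p * ∑ k ∈ Icc 1 (2 * n - 1), k ^ 2 / p := by
    rw [mul_sum, ← sum_sub_distrib]
    exact sum_congr rfl fun k _ => Int.emod_def _ _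
  have hM0 : 0 ≤ n ^ 2 / p := Int.ediv_nonneg (sq_nonneg n) (by omega)
  have hkey : n ^ 2 / p * κ (n ^ 2 / p - 1) = n ^ 2 / p * σ (n ^ 2 / p) := by
    rcases hM0.eq_or_lt with h | h
    · rw [← h, zero_mul, zero_mul]
    · rw [kappa_pred_eq_sigma hp hpp hn hσ hκ h]
  have hsmall := sum_Icc_sq_ediv hp hpp hn hσ
  have hlarge := sum_Icc_mul_pred_add_ediv hp hn hκ
  generalize n ^ 2 / p = M at *
  have htel : ∑ m ∈ Icc 0 (M - 1), ((n - σ (m + 1)) + (n - 1 - κ m)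
      - (2 * m + 1) * (σ (m + 1) - κ m) - 2 * (m * (κ m - σ m))) =
        M * (2 * n - 1) - 2 * M * σ M := by
    calc _ = ∑ m ∈ Icc 0 (M - 1), ((2 * n - 1) - (2 * (m + 1) * σ (m + 1) - 2 * m * σ m)) :=
          sum_congr rfl fun m _ => by ring
      _ = _ := by
        rw [sum_sub_distrib, Int.sum_Icc_sub_telescope (fun m => 2 * m * σ m) hM0, sum_const,
          Int.card_Icc, sub_add_cancel, sub_zero, nsmul_eq_mul, Int.toNat_of_nonneg hM0]
        ring
  rw [sum_sub_distrib, sum_sub_distrib, sum_add_distrib, ← mul_sum] at htel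
  linear_combination 3 * hpair + 6 * hmod + Int.six_mul_sum_Icc_sq (N := 2 * n - 1) (by omega)
    - 3 * p * two_mul_sum_Icc_sq_ediv hp hn - 6 * p * hsmall - 6 * p * hlarge - 6 * p * htel
    - 12 * p * hkey + 3 * (n - n ^ 2) * hp

end

/-- Theorem 9 (main result): for `p = 4n-1` prime with `n > 1`,
`(1/2)∑_{k=1}^{p-1} r_p(k²) = -p∑_{m=0}^{M-1}(2m+1)(⌊R_{m+1}⌋-⌊Q_m⌋)
  - 2p∑_{m=0}^{M-1} m(⌊Q_m⌋-⌊R_m⌋) + (4n³+3n²-n)/6 - Mp(2n-1-2⌊Q_{M-1}⌋)`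
(for `M = 0` the sums are empty and the final term vanishes). -/
theorem stmt_16 (n : ℤ) (hn : 1 < n) (p : ℤ) (hp : p = 4 * n - 1) (hpp : Prime p)
    (M : ℤ) (hM : M = n ^ 2 / p)
    (Q R : ℤ → ℝ)
    (hQ : ∀ m, Q m = 1 / 2 + Real.sqrt (4 * (m : ℝ) * (p : ℝ) + 3 * (p : ℝ) - 4) / 2)
    (hR : ∀ m, R m = Real.sqrt ((m : ℝ) * (p : ℝ))) :
    (1 / 2 : ℝ) * ∑ k ∈ Finset.Icc (1 : ℤ) (p - 1), ((k ^ 2 % p : ℤ) : ℝ) =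
      -(p : ℝ) * ∑ m ∈ Finset.Icc (0 : ℤ) (M - 1),
          (2 * (m : ℝ) + 1) * ((⌊R (m + 1)⌋ : ℝ) - (⌊Q m⌋ : ℝ))
      - 2 * (p : ℝ) * ∑ m ∈ Finset.Icc (0 : ℤ) (M - 1),
          (m : ℝ) * ((⌊Q m⌋ : ℝ) - (⌊R m⌋ : ℝ))
      + (4 * (n : ℝ) ^ 3 + 3 * (n : ℝ) ^ 2 - (n : ℝ)) / 6
      - (M : ℝ) * (p : ℝ) * (2 * (n : ℝ) - 1 - 2 * (⌊Q (M - 1)⌋ : ℝ)) := by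
  have hp0 : 0 < p := by omega
  have hσ : ∀ m k : ℤ, 0 ≤ m → 0 ≤ k → (m * p < k ^ 2 ↔ ⌊R m⌋ < k) := fun m k hm hk => by
    rw [hR, floor_sqrt_lt_iff (by exact_mod_cast mul_nonneg hm hp0.le) hk]
    exact_mod_cast Iff.rfl
  have hκ : ∀ m j : ℤ, 0 ≤ m → 1 ≤ j → (m * p + 3 * n - 2 < j * (j - 1) ↔ ⌊Q m⌋ < j) :=
    fun m j hm hj => by
      have hD : 4 * (m : ℝ) * p + 3 * p - 4 = ((4 * (m * p + 3 * n - 2) + 1 : ℤ) : ℝ) := by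
        rw [hp]; push_cast; ring
      rw [hQ, floor_half_add_sqrt_div_two_lt_iff (by rw [hD]; exact_mod_cast (by nlinarith)) hj,
        hD, show (2 * (j : ℝ) - 1) ^ 2 = ((4 * (j * (j - 1)) + 1 : ℤ) : ℝ) by push_cast; ring,
        Int.cast_lt]
      omega
  have key := congrArg (Int.cast : ℤ → ℝ) (three_mul_sum_Icc_sq_emod hp hpp hn hσ hκ)
  rw [← hM] at key
  push_cast at key
  linarith
end

section
/- Let n > 1 be an integer such that p = 4n−1 is prime, let M = ⌊n²/p⌋, and for integers m ≥ 0 set Q_m = 1/2 + (1/2)·√(4mp + 3p − 4) and R_m = √(mp). Then (1/2)·∑_{k=1}^{p−1} r_p(k²) = p·(∑_{m=0}^{M} ⌊R_m⌋ + ∑_{m=0}^{M−1} ⌊Q_m⌋) − M·p·(2n−1) + p·(n² + n)/6. -/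
/-!
As `k` and `p - k` have the same square modulo `p` and `r_p(k²) = k² - p⌊k²/p⌋`, the claim reduces
to evaluating `∑_{k=1}^{2n-1} ⌊k²/p⌋` by counting lattice points. For `k < n`, `⌊k²/p⌋` counts
the `m ∈ [1, M]` with `mp ≤ k²`; read by rows, row `m` holds the `k > ⌊√(mp)⌋`, because `mp` is
never a square (`p` is prime). For `n ≤ k < 2n`, count instead the pairs with
`⌊k²/p⌋ + n - k ≤ m < M`: the condition is `k² < (m + k - n + 1)p`, which for `j = p - 2k`
becomes `j² ≤ (4m + 3)p - 4` because both sides are `1` modulo `4`, so row `m` holds `⌊Q_m⌋`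
of them.
-/

open Finset

lemma Finset.sum_eq_sum_of_card_filter {ι κ : Type*} {s : Finset ι} {t : Finset κ}
    (r : κ → ι → Prop) [∀ m k, Decidable (r m k)] {f : ι → ℤ} {g : κ → ℤ}
    (hf : ∀ k ∈ s, f k = #{m ∈ t | r m k}) (hg : ∀ m ∈ t, g m = #{k ∈ s | r m k}) :
    ∑ k ∈ s, f k = ∑ m ∈ t, g m := by
  rw [sum_congr rfl hf, sum_congr rfl hg]
  exact_mod_cast (sum_card_bipartiteAbove_eq_sum_card_bipartiteBelow (s := t) (t := s) r).symm

namespace Int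

lemma sum_Icc_add_sum_Icc {β : Type*} [AddCommMonoid β] (f : ℤ → β) {a b c : ℤ}
    (hab : a ≤ b + 1) (hbc : b ≤ c) :
    ∑ k ∈ Icc a b, f k + ∑ k ∈ Icc (b + 1) c, f k = ∑ k ∈ Icc a c, f k := by
  rw [← sum_union]
  · congr 1
    ext x
    simp only [mem_union, mem_Icc]
    omega
  · rw [disjoint_left]
    intro x hx hx'
    simp only [mem_Icc] at hx hx'
    omega

lemma sum_Icc_one_two_mul_of_reflect {β : Type*} [AddCommMonoid β] (f : ℤ → β) {N : ℤ}
    (hN : 0 ≤ N) (hf : ∀ k, f (2 * N + 1 - k) = f k) :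
    ∑ k ∈ Icc 1 (2 * N), f k = 2 • ∑ k ∈ Icc 1 N, f k := by
  rw [← sum_Icc_add_sum_Icc f (by omega : 1 ≤ N + 1) (by omega : N ≤ 2 * N), two_nsmul]
  congr 1
  refine sum_nbij' (fun k ↦ 2 * N + 1 - k) (fun k ↦ 2 * N + 1 - k) ?_ ?_
    (fun k _ ↦ by ring) (fun k _ ↦ by ring) (fun k _ ↦ (hf k).symm)
  all_goals
    intro k hk
    simp only [mem_Icc] at hk ⊢
    omega

lemma sum_Icc_id_mul_two {a b : ℤ} (h : a - 1 ≤ b) :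
    (∑ k ∈ Icc a b, k) * 2 = (b + 1 - a) * (a + b) := by
  induction b, h using Int.leInduction with
  | base => simp
  | succ b hb ih =>
    rw [← sum_Icc_add_sum_Icc _ (by omega) (le_add_of_nonneg_right zero_le_one), Icc_self,
      sum_singleton]
    linear_combination ih

lemma sum_Icc_one_sq_mul_six {N : ℤ} (h : 0 ≤ N) :
    (∑ k ∈ Icc 1 N, k ^ 2) * 6 = N * (N + 1) * (2 * N + 1) := by
  induction N, h using Int.leInduction with
  | base => simp
  | succ N hN ih =>
    rw [← sum_Icc_add_sum_Icc _ (by omega) (le_add_of_nonneg_right zero_le_one), Icc_self,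
      sum_singleton]
    linear_combination ih

lemma card_filter_Icc_of_iff_le {P : ℤ → Prop} [DecidablePred P] {a b c : ℤ}
    (hP : ∀ m ∈ Icc a b, P m ↔ m ≤ c) (hac : a ≤ c + 1) (hcb : c ≤ b) :
    (#{m ∈ Icc a b | P m} : ℤ) = c + 1 - a := by
  have : {m ∈ Icc a b | P m} = Icc a c := by
    rw [filter_congr hP]
    ext m
    simp only [mem_filter, mem_Icc]
    omega
  rw [this, card_Icc, toNat_of_nonneg (by omega)]

lemma card_filter_Icc_of_iff_ge {P : ℤ → Prop} [DecidablePred P] {a b c : ℤ}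
    (hP : ∀ m ∈ Icc a b, P m ↔ c ≤ m) (hac : a ≤ c) (hcb : c ≤ b + 1) :
    (#{m ∈ Icc a b | P m} : ℤ) = b + 1 - c := by
  have : {m ∈ Icc a b | P m} = Icc c b := by
    rw [filter_congr hP]
    ext m
    simp only [mem_filter, mem_Icc]
    omega
  rw [this, card_Icc, toNat_of_nonneg (by omega)]

lemma le_floor_sqrt_iff {k : ℤ} {x : ℝ} (hk : 0 < k) : k ≤ ⌊√x⌋ ↔ (k : ℝ) ^ 2 ≤ x := by
  rw [le_floor, Real.le_sqrt' (by exact_mod_cast hk)]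

lemma le_floor_half_add_sqrt_div_two_iff {j : ℤ} {x : ℝ} (hj : 0 < j) :
    j ≤ ⌊1 / 2 + √x / 2⌋ ↔ ((2 * j - 1 : ℤ) : ℝ) ^ 2 ≤ x := by
  rw [← le_floor_sqrt_iff (by omega), le_floor, le_floor]
  push_cast
  constructor <;> intro h <;> linarith

lemma mul_ne_sq_of_prime {p : ℤ} (hp : Prime p) (m : ℤ) {k : ℤ} (hk : 0 < k) (hkp : k < p) :
    m * p ≠ k ^ 2 := fun h ↦
  absurd (le_of_dvd hk (hp.dvd_of_dvd_pow (Dvd.intro_left m h))) (not_le.mpr hkp)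

end Int

open Int

theorem sum_Icc_sq_div_add_sum_floor_sqrt {n p : ℤ} (hpp : Prime p) (hn : 0 < n) (hnp : n < p) :
    ∑ k ∈ Icc 1 (n - 1), k ^ 2 / p + ∑ m ∈ Icc 1 (n ^ 2 / p), ⌊√((m : ℝ) * p)⌋ =
      (n - 1) * (n ^ 2 / p) := by
  have hp : 0 < p := hn.trans hnp
  set M := n ^ 2 / p
  have hM : 0 ≤ M := ediv_nonneg (sq_nonneg n) hp.le
  have hMp : M * p ≤ n ^ 2 := Int.ediv_mul_le _ hp.ne'
  have hcount : ∑ k ∈ Icc 1 (n - 1), k ^ 2 / p =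
      ∑ m ∈ Icc 1 M, (n - 1 - ⌊√((m : ℝ) * p)⌋) := by
    refine sum_eq_sum_of_card_filter (fun m k ↦ m * p ≤ k ^ 2) (fun k hk ↦ ?_) (fun m hm ↦ ?_)
    · rw [mem_Icc] at hk
      have hkM : k ^ 2 / p ≤ M := Int.ediv_le_ediv hp (by nlinarith)
      rw [card_filter_Icc_of_iff_le (fun m _ ↦ (Int.le_ediv_iff_mul_le hp).symm)
        (by linarith [ediv_nonneg (sq_nonneg k) hp.le]) hkM]
      ring
    · rw [mem_Icc] at hm
      set s := ⌊√((m : ℝ) * p)⌋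
      have hs : ∀ k : ℤ, 0 < k → (k ≤ s ↔ k ^ 2 ≤ m * p) := fun k hk ↦ by
        rw [le_floor_sqrt_iff hk]
        norm_cast
      have hsn : s < n := by
        rw [← not_le, hs n hn]
        intro h
        exact mul_ne_sq_of_prime hpp m hn hnp (le_antisymm (by nlinarith) h)
      rw [card_filter_Icc_of_iff_ge (c := s + 1) (fun k hk ↦ ?_)
        (by linarith [floor_nonneg.mpr (Real.sqrt_nonneg ((m : ℝ) * p))]) (by omega)]
      · ring
      · rw [mem_Icc] at hk
        rw [Int.add_one_le_iff, ← not_le, hs k (by omega), not_le]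
        exact ⟨fun h ↦ h.lt_of_ne (mul_ne_sq_of_prime hpp m (by omega) (by omega)), le_of_lt⟩
  rw [hcount, sum_sub_distrib, sum_const, card_Icc, nsmul_eq_mul, toNat_of_nonneg (by omega)]
  ring

theorem sum_floor_half_add_sqrt_div_two {n p : ℤ} (hn : 0 < n) (hp : p = 4 * n - 1) :
    ∑ m ∈ Icc (0 : ℤ) (n ^ 2 / p - 1), ⌊1 / 2 + √(4 * (m : ℝ) * p + 3 * p - 4) / 2⌋ =
      ∑ k ∈ Icc n (2 * n - 1), (n ^ 2 / p - k ^ 2 / p - n + k) := by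
  have hp0 : 0 < p := by omega
  set M := n ^ 2 / p
  have hMp : M * p ≤ n ^ 2 := Int.ediv_mul_le _ hp0.ne'
  have hnM : n ^ 2 < (M + 1) * p := Int.lt_ediv_add_one_mul_self _ hp0
  symm
  refine sum_eq_sum_of_card_filter (fun m k ↦ k ^ 2 / p + n - k ≤ m) (fun k hk ↦ ?_)
    (fun m hm ↦ ?_)
  · rw [mem_Icc] at hk
    have hlow : k - n ≤ k ^ 2 / p := by
      rw [Int.le_ediv_iff_mul_le hp0, hp]
      nlinarith [sq_nonneg (k - 2 * n)]
    have hup : k ^ 2 / p < M + k - n + 1 := by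
      rw [Int.ediv_lt_iff_lt_mul hp0]
      have : (k - n) * (k + n) ≤ (k - n) * p := by
        apply mul_le_mul_of_nonneg_left _ (by omega)
        omega
      nlinarith
    rw [card_filter_Icc_of_iff_ge (fun m _ ↦ Iff.rfl) (by omega) (by omega)]
    ring
  · rw [mem_Icc] at hm
    set q := ⌊1 / 2 + √(4 * (m : ℝ) * p + 3 * p - 4) / 2⌋
    have hq : ∀ j : ℤ, 0 < j → (j ≤ q ↔ (2 * j - 1) ^ 2 ≤ 4 * m * p + 3 * p - 4) := fun j hj ↦ by
      rw [le_floor_half_add_sqrt_div_two_iff hj]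
      norm_cast
    have hq0 : 0 ≤ q := floor_nonneg.mpr (by positivity)
    have hqn : q ≤ n := by
      rw [← Int.lt_add_one_iff, ← not_le, hq (n + 1) (by omega)]
      nlinarith
    rw [card_filter_Icc_of_iff_ge (c := 2 * n - q) (fun k hk ↦ ?_) (by omega) (by omega)]
    · ring
    · rw [mem_Icc] at hk
      have key : 4 * m * p + 3 * p - 4 - (2 * (2 * n - k) - 1) ^ 2 =
          4 * ((m + k - n + 1) * p - k ^ 2) - 4 := by
        rw [hp]; ring
      calc k ^ 2 / p + n - k ≤ m ↔ k ^ 2 / p < m + k - n + 1 := by omega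
        _ ↔ k ^ 2 < (m + k - n + 1) * p := Int.ediv_lt_iff_lt_mul hp0
        _ ↔ (2 * (2 * n - k) - 1) ^ 2 ≤ 4 * m * p + 3 * p - 4 := by
          constructor <;> intro h <;> linarith
        _ ↔ 2 * n - k ≤ q := (hq _ (by omega)).symm
        _ ↔ 2 * n - q ≤ k := by omega

theorem three_mul_sum_sq_emod {n p : ℤ} (hn : 0 < n) (hp : p = 4 * n - 1) (hpp : Prime p) :
    3 * ∑ k ∈ Icc 1 (p - 1), k ^ 2 % p =
      6 * p * (∑ m ∈ Icc (0 : ℤ) (n ^ 2 / p), ⌊√((m : ℝ) * p)⌋ +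
        ∑ m ∈ Icc (0 : ℤ) (n ^ 2 / p - 1), ⌊1 / 2 + √(4 * (m : ℝ) * p + 3 * p - 4) / 2⌋) -
      6 * (n ^ 2 / p) * p * (2 * n - 1) + p * (n ^ 2 + n) := by
  have hp0 : 0 < p := by omega
  have hM : 0 ≤ n ^ 2 / p := Int.ediv_nonneg (sq_nonneg n) hp0.le
  have hsymm (k : ℤ) : (2 * (2 * n - 1) + 1 - k) ^ 2 % p = k ^ 2 % p := by
    rw [show (2 * (2 * n - 1) + 1 - k) ^ 2 = k ^ 2 + p * (p - 2 * k) by rw [hp]; ring,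
      Int.add_mul_emod_self_left]
  have hreflect : ∑ k ∈ Icc 1 (p - 1), k ^ 2 % p = 2 * ∑ k ∈ Icc 1 (2 * n - 1), k ^ 2 % p := by
    rw [show p - 1 = 2 * (2 * n - 1) by omega, sum_Icc_one_two_mul_of_reflect _ (by omega) hsymm,
      nsmul_eq_mul, Nat.cast_ofNat]
  have hemod : ∑ k ∈ Icc 1 (2 * n - 1), k ^ 2 % p =
      ∑ k ∈ Icc 1 (2 * n - 1), k ^ 2 - p * ∑ k ∈ Icc 1 (2 * n - 1), k ^ 2 / p := by
    rw [mul_sum, ← sum_sub_distrib]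
    exact sum_congr rfl fun k _ ↦ Int.emod_def _ _
  have hsplit := sum_Icc_add_sum_Icc (fun k ↦ k ^ 2 / p) (a := 1) (b := n - 1) (c := 2 * n - 1)
    (by omega) (by omega)
  have hzero := sum_Icc_add_sum_Icc (fun m : ℤ ↦ ⌊√((m : ℝ) * p)⌋) (a := 0) (b := 0)
    (c := n ^ 2 / p) (by omega) hM
  have hhigh : ∑ k ∈ Icc n (2 * n - 1), (n ^ 2 / p - k ^ 2 / p - n + k) =
      n * (n ^ 2 / p) - ∑ k ∈ Icc n (2 * n - 1), k ^ 2 / p - n * n +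
        ∑ k ∈ Icc n (2 * n - 1), k := by
    rw [sum_add_distrib, sum_sub_distrib, sum_sub_distrib, sum_const, sum_const, card_Icc,
      nsmul_eq_mul, nsmul_eq_mul, toNat_of_nonneg (by omega)]
    ring
  simp only [sub_add_cancel, zero_add, Icc_self, sum_singleton, Int.cast_zero, zero_mul,
    Real.sqrt_zero, floor_zero] at hsplit hzero
  linear_combination 3 * hreflect + 6 * hemod + sum_Icc_one_sq_mul_six (N := 2 * n - 1) (by omega)
    + 6 * p * hsplit - 6 * p * sum_Icc_sq_div_add_sum_floor_sqrt hpp hn (by omega)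
    - 6 * p * (sum_floor_half_add_sqrt_div_two hn hp).trans hhigh
    - 3 * p * sum_Icc_id_mul_two (a := n) (b := 2 * n - 1) (by omega) + 6 * p * hzero
    + (2 * n - 4 * n ^ 2) * hp

/-- Corollary 10: for `p = 4n-1` prime with `n > 1`,
`(1/2)∑_{k=1}^{p-1} r_p(k²) = p(∑_{m=0}^{M}⌊R_m⌋ + ∑_{m=0}^{M-1}⌊Q_m⌋)
  - Mp(2n-1) + p(n²+n)/6`. -/
theorem stmt_17 (n : ℤ) (hn : 1 < n) (p : ℤ) (hp : p = 4 * n - 1) (hpp : Prime p)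
    (M : ℤ) (hM : M = n ^ 2 / p)
    (Q R : ℤ → ℝ)
    (hQ : ∀ m, Q m = 1 / 2 + Real.sqrt (4 * (m : ℝ) * (p : ℝ) + 3 * (p : ℝ) - 4) / 2)
    (hR : ∀ m, R m = Real.sqrt ((m : ℝ) * (p : ℝ))) :
    (1 / 2 : ℝ) * ∑ k ∈ Finset.Icc (1 : ℤ) (p - 1), ((k ^ 2 % p : ℤ) : ℝ) =
      (p : ℝ) * ((∑ m ∈ Finset.Icc (0 : ℤ) M, (⌊R m⌋ : ℝ))
                  + ∑ m ∈ Finset.Icc (0 : ℤ) (M - 1), (⌊Q m⌋ : ℝ))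
      - (M : ℝ) * (p : ℝ) * (2 * (n : ℝ) - 1)
      + (p : ℝ) * ((n : ℝ) ^ 2 + (n : ℝ)) / 6 := by
  have h := congrArg (Int.cast : ℤ → ℝ) (three_mul_sum_sq_emod (by omega) hp hpp)
  push_cast at h
  simp only [hQ, hR, hM]
  linarith
end
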